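/- Let X be a Hilbert space, A ∈ L(X), and T ∈ L(X) bijective. If T*A is weakly coercive, i.e., there exists a compact K ∈ L(X) with inf_{‖u‖=1} |⟨(T*A + K)u, u⟩| > 0, then A is Fredholm with index zero. -/

import Mathlib

/-!
`B := T*A + K` is coercive, hence invertible, and `T*` is invertible, so
`A = (T*)⁻¹ B (1 - C)` with `C := B⁻¹K` compact. In a Hilbert space a compact `C` lies within
distance `< 1` of a finite-rank `F` (project onto the span of a finite net of the image of the
unit ball), so `1 - C = (1 - D)(1 - (1 - D)⁻¹F)` with `D := C - F` and `1 - D` invertible.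
For `G` of finite rank, `1 - G` is the identity modulo `range G`: its kernel and cokernel are
those of its restriction to the finite-dimensional space `range G`, so they have equal dimension
by rank–nullity, and its range contains the closed finite-codimensional subspace `ker G`, so it
is closed.
-/

open ContinuousLinearMap

/-- `T` is Fredholm of index zero: closed range, finite-dimensional kernel and
cokernel, and `dim ker = dim coker`. -/
def FredholmIdxZero {X : Type*} [NormedAddCommGroup X] [InnerProductSpace ℂ X]
    (T : X →L[ℂ] X) : Prop :=
  IsClosed ((LinearMap.range (T : X →ₗ[ℂ] X) : Submodule ℂ X) : Set X) ∧
  FiniteDimensional ℂ (LinearMap.ker (T : X →ₗ[ℂ] X)) ∧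
  FiniteDimensional ℂ (X ⧸ LinearMap.range (T : X →ₗ[ℂ] X)) ∧
  Module.finrank ℂ (LinearMap.ker (T : X →ₗ[ℂ] X)) =
    Module.finrank ℂ (X ⧸ LinearMap.range (T : X →ₗ[ℂ] X))

namespace LinearMap

variable {K V : Type*} [Field K] [AddCommGroup V] [Module K V] (G : V →ₗ[K] V)

lemma ker_id_sub_le_range : ker (id - G) ≤ range G := fun x hx => by
  rw [mem_ker, sub_apply, id_apply, sub_eq_zero] at hx
  exact hx ▸ mem_range_self G x

lemma id_sub_mem_range {w : V} (hw : w ∈ range G) : (id - G : V →ₗ[K] V) w ∈ range G :=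
  sub_mem hw (mem_range_self G w)

lemma map_ker_id_sub : (ker G).map (id - G) = ker G := by
  ext x
  constructor
  · rintro ⟨y, hy, rfl⟩
    simp [mem_ker.mp hy]
  · intro hx
    exact ⟨x, hx, by simp [mem_ker.mp hx]⟩

abbrev idSubRestrictRange : range G →ₗ[K] range G :=
  (id - G).restrict fun _ => G.id_sub_mem_range

lemma ker_id_sub_eq_map_ker_idSubRestrictRange :
    ker (id - G) = (ker G.idSubRestrictRange).map (range G).subtype := by
  ext x
  constructor
  · intro hx
    exact ⟨⟨x, G.ker_id_sub_le_range hx⟩, Subtype.ext (mem_ker.mp hx), rfl⟩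
  · rintro ⟨w, hw, rfl⟩
    exact mem_ker.mpr (congrArg Subtype.val (mem_ker.mp hw))

lemma surjective_mkQ_range_id_sub_comp_subtype :
    Function.Surjective ((range (id - G)).mkQ ∘ₗ (range G).subtype) := by
  rintro ⟨x⟩
  refine ⟨⟨G x, mem_range_self G x⟩, (Submodule.Quotient.eq' _).mpr ?_⟩
  exact ⟨x, by simp [neg_add_eq_sub]⟩

lemma ker_mkQ_range_id_sub_comp_subtype :
    ker ((range (id - G)).mkQ ∘ₗ (range G).subtype) = range G.idSubRestrictRange := by
  ext w
  simp only [mem_ker, coe_comp, Function.comp_apply, Submodule.mkQ_apply,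
    Submodule.subtype_apply, Submodule.Quotient.mk_eq_zero]
  constructor
  · rintro ⟨x, hx⟩
    have hxG : x ∈ range G := by
      have : x = w + G x := by rw [← hx]; simp
      exact this ▸ add_mem w.2 (mem_range_self G x)
    exact ⟨⟨x, hxG⟩, Subtype.ext hx⟩
  · rintro ⟨v, rfl⟩
    exact mem_range_self (id - G : V →ₗ[K] V) v

noncomputable def quotientRangeIdSubEquiv :
    (V ⧸ range (id - G)) ≃ₗ[K] (range G ⧸ range G.idSubRestrictRange) :=
  ((Submodule.quotEquivOfEq _ _ G.ker_mkQ_range_id_sub_comp_subtype).symm.trans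
    (quotKerEquivOfSurjective _ G.surjective_mkQ_range_id_sub_comp_subtype)).symm

variable [FiniteDimensional K (range G)]

instance finiteDimensional_ker_id_sub : FiniteDimensional K (ker (id - G)) :=
  Submodule.finiteDimensional_of_le G.ker_id_sub_le_range

instance finiteDimensional_quotient_range_id_sub : FiniteDimensional K (V ⧸ range (id - G)) :=
  Module.Finite.equiv G.quotientRangeIdSubEquiv.symm

theorem finrank_ker_id_sub_eq_finrank_quotient_range :
    Module.finrank K (ker (id - G)) = Module.finrank K (V ⧸ range (id - G)) := by
  rw [G.ker_id_sub_eq_map_ker_idSubRestrictRange, Submodule.finrank_map_subtype_eq,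
    G.quotientRangeIdSubEquiv.finrank_eq]
  have := G.idSubRestrictRange.finrank_range_add_finrank_ker
  have := (range G.idSubRestrictRange).finrank_quotient_add_finrank
  omega

end LinearMap

section RCLike

variable {𝕜 E : Type*} [RCLike 𝕜] [NormedAddCommGroup E] [InnerProductSpace 𝕜 E]

lemma Submodule.norm_sub_starProjection_le (U : Submodule 𝕜 E) [U.HasOrthogonalProjection]
    (x : E) {y : E} (hy : y ∈ U) : ‖x - U.starProjection x‖ ≤ ‖x - y‖ := by
  rw [starProjection_minimal]
  exact ciInf_le (f := fun v : U => ‖x - v‖)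
    ⟨0, Set.forall_mem_range.mpr fun _ => norm_nonneg _⟩ ⟨y, hy⟩

lemma ContinuousLinearMap.sq_norm_mul_le_norm_inner_map_self {f : E →L[𝕜] E} {c : ℝ}
    (h : ∀ u, ‖u‖ = 1 → c ≤ ‖inner 𝕜 (f u) u‖) (x : E) : ‖x‖ ^ 2 * c ≤ ‖inner 𝕜 (f x) x‖ := by
  rcases eq_or_ne x 0 with rfl | hx
  · simp
  have hx' : 0 < ‖x‖ := norm_pos_iff.mpr hx
  have hunit : ‖(‖x‖⁻¹ : 𝕜) • x‖ = 1 := by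
    rw [norm_smul, norm_inv, RCLike.norm_ofReal, abs_norm, inv_mul_cancel₀ hx'.ne']
  have := h _ hunit
  rwa [map_smul, inner_smul_left, inner_smul_right, norm_mul, norm_mul, RCLike.norm_conj,
    norm_inv, RCLike.norm_ofReal, abs_norm, ← mul_assoc, ← mul_inv, ← sq,
    inv_mul_eq_div, le_div_iff₀ (by positivity), mul_comm] at this

lemma ContinuousLinearMap.isUnit_of_forall_norm_eq_one_le_norm_inner_map [CompleteSpace E]
    {f : E →L[𝕜] E} {c : ℝ} (hc : 0 < c) (h : ∀ u, ‖u‖ = 1 → c ≤ ‖inner 𝕜 (f u) u‖) :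
    IsUnit f :=
  isUnit_of_forall_le_norm_inner_map f (c := ⟨c, hc.le⟩) hc (sq_norm_mul_le_norm_inner_map_self h)

theorem IsCompactOperator.exists_finiteDimensional_range_norm_sub_lt {F : Type*}
    [NormedAddCommGroup F] [InnerProductSpace 𝕜 F] {C : E →L[𝕜] F} (hC : IsCompactOperator C)
    {ε : ℝ} (hε : 0 < ε) :
    ∃ C' : E →L[𝕜] F, FiniteDimensional 𝕜 (LinearMap.range (C' : E →ₗ[𝕜] F)) ∧ ‖C - C'‖ < ε := by
  obtain ⟨t, ht, hcover⟩ := Metric.totallyBounded_iff.mp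
    ((hC.isCompact_closure_image_closedBall 1).totallyBounded.subset subset_closure) (ε / 2)
    (half_pos hε)
  let V := Submodule.span 𝕜 t
  have : FiniteDimensional 𝕜 V := .span_of_finite 𝕜 ht
  refine ⟨V.starProjection ∘L C, ?_, ?_⟩
  · refine Submodule.finiteDimensional_of_le (S₂ := V) ?_
    rintro _ ⟨x, rfl⟩
    exact V.starProjection_apply_mem (C x)
  refine (opNorm_le_of_unit_norm (half_pos hε).le fun u hu => ?_).trans_lt (half_lt_self hε)
  obtain ⟨y, hy, hCu⟩ := Set.mem_iUnion₂.mp (hcover ⟨u, mem_closedBall_zero_iff.mpr hu.le, rfl⟩)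
  calc ‖(C - V.starProjection ∘L C) u‖ = ‖C u - V.starProjection (C u)‖ := rfl
    _ ≤ ‖C u - y‖ := V.norm_sub_starProjection_le _ (Submodule.subset_span hy)
    _ ≤ ε / 2 := by rw [← dist_eq_norm]; exact (Metric.mem_ball.mp hCu).le

end RCLike

section Fredholm

variable {X : Type*} [NormedAddCommGroup X] [InnerProductSpace ℂ X]

theorem fredholmIdxZero_one_sub_of_finiteDimensional_range (G : X →L[ℂ] X)
    [FiniteDimensional ℂ (LinearMap.range (G : X →ₗ[ℂ] X))] : FredholmIdxZero (1 - G) := by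
  have hL : ((1 - G : X →L[ℂ] X) : X →ₗ[ℂ] X) = LinearMap.id - (G : X →ₗ[ℂ] X) := rfl
  rw [FredholmIdxZero, hL]
  refine ⟨?_, inferInstance, inferInstance,
    (G : X →ₗ[ℂ] X).finrank_ker_id_sub_eq_finrank_quotient_range⟩
  have : (LinearMap.ker (G : X →ₗ[ℂ] X)).CoFG :=
    LinearMap.ker_coFG_iff_hasFiniteRange.mpr (Module.Finite.iff_fg.mp inferInstance)
  apply LinearMap.isClosed_range_of_isClosed_map_of_finiteDimensional_quotient
    (s := LinearMap.ker (G : X →ₗ[ℂ] X))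
  rw [LinearMap.map_ker_id_sub]
  exact G.isClosed_ker

theorem FredholmIdxZero.isUnit_mul {S M : X →L[ℂ] X} (hS : IsUnit S) (hM : FredholmIdxZero M) :
    FredholmIdxZero (S * M) := by
  obtain ⟨u, rfl⟩ := hS
  obtain ⟨hclosed, hker, hcoker, hrank⟩ := hM
  let e := ContinuousLinearEquiv.unitsEquiv ℂ X u
  have hSM : ((↑u * M : X →L[ℂ] X) : X →ₗ[ℂ] X) = (e.toLinearEquiv : X →ₗ[ℂ] X) ∘ₗ M := rfl
  have hrange : (LinearMap.range (M : X →ₗ[ℂ] X)).map (e.toLinearEquiv : X →ₗ[ℂ] X) =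
      LinearMap.range ((↑u * M : X →L[ℂ] X) : X →ₗ[ℂ] X) := by
    rw [hSM, LinearMap.range_comp]
  let q := Submodule.Quotient.equiv _ _ e.toLinearEquiv hrange
  refine ⟨?_, ?_, Module.Finite.equiv q, ?_⟩
  · rw [← hrange]
    exact e.toHomeomorph.isClosedMap _ hclosed
  · rwa [hSM, LinearEquiv.ker_comp]
  · rw [hSM, LinearEquiv.ker_comp, hrank, ← hSM]
    exact q.finrank_eq

theorem fredholmIdxZero_one_sub_of_isCompactOperator [CompleteSpace X] {C : X →L[ℂ] X}
    (hC : IsCompactOperator C) : FredholmIdxZero (1 - C) := by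
  obtain ⟨F, hF, hCF⟩ := hC.exists_finiteDimensional_range_norm_sub_lt one_pos
  let u := Units.oneSub (C - F) hCF
  have hfac : 1 - C = ↑u * (1 - ↑u⁻¹ * F) := by
    rw [mul_sub, mul_one, u.mul_inv_cancel_left, Units.val_oneSub]
    abel
  have : FiniteDimensional ℂ (LinearMap.range ((↑u⁻¹ * F : X →L[ℂ] X) : X →ₗ[ℂ] X)) := by
    rw [toLinearMap_mul, Module.End.mul_eq_comp, LinearMap.range_comp]
    infer_instance
  rw [hfac]
  exact (fredholmIdxZero_one_sub_of_finiteDimensional_range _).isUnit_mul u.isUnit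

end Fredholm

/-- If `T` is bijective and `T*A` is weakly coercive (coercive up to a compact
perturbation), then `A` is Fredholm of index zero. -/
theorem stmt2 {X : Type*} [NormedAddCommGroup X] [InnerProductSpace ℂ X] [CompleteSpace X]
    (A T : X →L[ℂ] X) (hT : Function.Bijective T)
    (h : ∃ K : X →L[ℂ] X, IsCompactOperator (⇑K) ∧
      ∃ c > (0 : ℝ), ∀ u : X, ‖u‖ = 1 →
        c ≤ ‖(inner ℂ (((ContinuousLinearMap.adjoint T) ∘L A + K) u) u : ℂ)‖) :
    FredholmIdxZero A := by
  obtain ⟨K, hK, c, hc, hcoer⟩ := h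
  obtain ⟨B, hB⟩ := isUnit_of_forall_norm_eq_one_le_norm_inner_map hc hcoer
  obtain ⟨S, hS⟩ : IsUnit (adjoint T) := by
    rw [← star_eq_adjoint]
    exact (isUnit_iff_bijective.mpr hT).star
  have hA : A = ↑(S⁻¹ * B) * (1 - ↑B⁻¹ * K) :=
    calc A = ↑S⁻¹ * (↑S * A) := (S.inv_mul_cancel_left A).symm
      _ = ↑S⁻¹ * (↑B * (1 - ↑B⁻¹ * K)) := by
        rw [mul_sub, mul_one, B.mul_inv_cancel_left, hB, hS, add_sub_cancel_right]
        rfl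
      _ = ↑(S⁻¹ * B) * (1 - ↑B⁻¹ * K) := by rw [Units.val_mul, mul_assoc]
  rw [hA]
  exact (fredholmIdxZero_one_sub_of_isCompactOperator (hK.clm_comp _)).isUnit_mul (Units.isUnit _)
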